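/- Let G be a connected simple graph with vertex set {1,...,n} that is not bipartite. Then the set of G-indecomposable points in ℝP_+^{n-1} consists exactly of the points [Σ_{i∈I} f_i − Σ_{j∈J} f_j], where I, J ⊆ {1,...,n} are disjoint sets such that the subgraph of G with vertex set I ∪ J and edge set {ij ∈ E(G) : i ∈ I, j ∈ J} is connected, and no connected component of the induced subgraph G − (I ∪ J) is bipartite. -/

import Mathlib

/-!
Since `(u, v(ij)) = u_i + u_j` and the incidence columns of a connected non-bipartite graph span
`ℝⁿ`, `u` is indecomposable iff every `w` with `w_i + w_j = 0` on the zero-sum edges of `u`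
(the edges `ij` with `u_i + u_j = 0`) is a multiple of `u`; otherwise
`u = (u/2 + t w) + (u/2 - t w)` decomposes `u` for small `t > 0`. A connected graph carries a
nonzero function alternating in sign along its edges iff it is bipartite. For `u = 1_I - 1_J`
the zero-sum edges are the `I`–`J` edges and the edges of `G - (I ∪ J)`, which gives one
direction; conversely, the criterion forces `u` to live on a single component of its zero-sum
graph, where `|u|` is constant.
-/

open scoped Classical

noncomputable section

/-- The standard inner product on `ℝ^n`. -/
def dotR {n : ℕ} (u v : Fin n → ℝ) : ℝ := ∑ i, u i * v i

/-- `[u] = [u']` : positive equivalence of nonzero vectors (`u' = r • u` with `r > 0`). -/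
def PosEq {n : ℕ} (u u' : Fin n → ℝ) : Prop := ∃ r : ℝ, 0 < r ∧ u' = r • u

/-- `u` is decomposable with respect to the set of vectors `S`. -/
def Decomp {n : ℕ} (S : Set (Fin n → ℝ)) (u : Fin n → ℝ) : Prop :=
  ∃ u' u'' : Fin n → ℝ, u' ≠ 0 ∧ u'' ≠ 0 ∧
    u' ∈ Submodule.span ℝ S ∧ u'' ∈ Submodule.span ℝ S ∧
    u = u' + u'' ∧ ¬ PosEq u u' ∧ ¬ PosEq u u'' ∧
    ∀ x ∈ S, 0 ≤ dotR u' x * dotR u'' x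

/-- `u` is indecomposable with respect to the set of vectors `S`. -/
def Indecomp {n : ℕ} (S : Set (Fin n → ℝ)) (u : Fin n → ℝ) : Prop :=
  u ≠ 0 ∧ u ∈ Submodule.span ℝ S ∧ ¬ Decomp S u

/-- The column `v(e) = f_i + f_j` of the incidence matrix corresponding to an edge
`e = ij`. -/
def edgeVec {n : ℕ} (e : Sym2 (Fin n)) : Fin n → ℝ := fun k => if k ∈ e then 1 else 0

/-- The set of columns of the incidence matrix of `G`. -/
def edgeVecs {n : ℕ} (G : SimpleGraph (Fin n)) : Set (Fin n → ℝ) := edgeVec '' G.edgeSet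

/-- A graph is bipartite if its vertices split into two parts such that every edge
joins the two parts. -/
def IsBipartiteG {V : Type*} (G : SimpleGraph V) : Prop :=
  ∃ S : Set V, ∀ a b, G.Adj a b → (a ∈ S ↔ b ∉ S)

/-- The subgraph of `G` with vertex set `I ∪ J` and edge set
`{ij ∈ E(G) : i ∈ I, j ∈ J}`. -/
def crossSubgraph {n : ℕ} (G : SimpleGraph (Fin n)) (I J : Finset (Fin n)) :
    SimpleGraph ((I : Set (Fin n)) ∪ (J : Set (Fin n)) : Set (Fin n)) :=
  (SimpleGraph.fromRel fun x y => G.Adj x y ∧ x ∈ I ∧ y ∈ J).induce _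


open Filter Topology

section Alternating

variable {V : Type*} {H : SimpleGraph V}

lemma SimpleGraph.Reachable.of_forall_adj_imp {p : V → Prop}
    (hp : ∀ a b, H.Adj a b → p a → p b) {a b : V} (h : H.Reachable a b) (ha : p a) : p b := by
  obtain ⟨q⟩ := h
  induction q with
  | nil => exact ha
  | cons hadj _ ih => exact ih (hp _ _ hadj ha)

def IsAlternating (H : SimpleGraph V) (z : V → ℝ) : Prop :=
  ∀ a b, H.Adj a b → z a + z b = 0

lemma IsAlternating.eq_or_eq_neg_of_reachable {z : V → ℝ} (hz : IsAlternating H z) {a b : V}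
    (h : H.Reachable a b) : z b = z a ∨ z b = -z a := by
  refine h.of_forall_adj_imp (p := fun x => z x = z a ∨ z x = -z a)
    (fun x y hxy hx => ?_) (.inl rfl)
  have := hz x y hxy
  rcases hx with hx | hx
  · exact .inr (by linarith)
  · exact .inl (by linarith)

lemma isBipartiteG_iff_exists_isAlternating :
    IsBipartiteG H ↔ ∃ z : V → ℝ, IsAlternating H z ∧ ∀ x, z x ≠ 0 := by
  constructor
  · rintro ⟨S, hS⟩
    refine ⟨fun x => if x ∈ S then 1 else -1, fun a b hab => ?_,
      fun x => by dsimp only; split_ifs <;> norm_num⟩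
    by_cases ha : a ∈ S
    · simp [ha, (hS a b hab).mp ha]
    · simp [ha, not_not.mp (mt (hS a b hab).mpr ha)]
  · rintro ⟨z, hz, hz0⟩
    refine ⟨{x | 0 < z x}, fun a b hab => ?_⟩
    have hsum := hz a b hab
    rcases (hz0 a).lt_or_gt with ha | ha <;> rcases (hz0 b).lt_or_gt with hb | hb <;>
      simp only [Set.mem_ofPred_eq] <;> constructor <;> intros <;> linarith

lemma IsAlternating.eq_zero (hconn : H.Connected) (hnb : ¬ IsBipartiteG H) {z : V → ℝ}
    (hz : IsAlternating H z) : z = 0 := by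
  by_contra hne
  obtain ⟨a, ha⟩ := Function.ne_iff.mp hne
  refine hnb (isBipartiteG_iff_exists_isAlternating.mpr ⟨z, hz, fun x hx => ha ?_⟩)
  rcases hz.eq_or_eq_neg_of_reachable (hconn.preconnected x a) with h | h <;> simp [h, hx]

/-- On a connected graph, `w / u` is constant along edges, since both functions change sign. -/
lemma IsAlternating.exists_eq_smul (hconn : H.Connected) {u w : V → ℝ} (hu : IsAlternating H u)
    (hu0 : ∀ x, u x ≠ 0) (hw : IsAlternating H w) : ∃ c : ℝ, w = c • u := by
  obtain ⟨a⟩ := hconn.nonempty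
  refine ⟨w a / u a, funext fun x => ?_⟩
  have hratio : w x / u x = w a / u a := by
    refine (hconn.preconnected a x).of_forall_adj_imp (p := fun y => w y / u y = w a / u a)
      (fun b c hbc hb => ?_) rfl
    rw [← hb, show w c = -w b by linarith [hw b c hbc], show u c = -u b by linarith [hu b c hbc],
      neg_div_neg_eq]
  rw [Pi.smul_apply, smul_eq_mul, ← hratio, div_mul_cancel₀ _ (hu0 x)]

lemma IsAlternating.dite_of_induce {T : Set V} (hT : ∀ a b, H.Adj a b → a ∈ T → b ∈ T)
    {z : T → ℝ} (hz : IsAlternating (H.induce T) z) :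
    IsAlternating H fun x => if h : x ∈ T then z ⟨x, h⟩ else 0 := by
  intro a b hab
  by_cases ha : a ∈ T
  · simp only [ha, hT a b hab ha, dite_true]
    exact hz ⟨a, ha⟩ ⟨b, _⟩ hab
  · simp [ha, mt (hT b a hab.symm) ha]

end Alternating

section Indecomposable

variable {n : ℕ} {S : Set (Fin n → ℝ)} {u w : Fin n → ℝ}

lemma dotR_eq_dotProduct (u v : Fin n → ℝ) : dotR u v = u ⬝ᵥ v := rfl

/-- Where `(u, x) ≠ 0` the product is close to `(u, x)² / 4 > 0` for small `t`; where
`(u, x) = 0` both factors vanish. -/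
lemma exists_pos_forall_dotR_mul_nonneg (hS : S.Finite)
    (hzero : ∀ x ∈ S, dotR u x = 0 → dotR w x = 0) :
    ∃ t : ℝ, 0 < t ∧ ∀ x ∈ S,
      0 ≤ dotR ((1 / 2 : ℝ) • u + t • w) x * dotR ((1 / 2 : ℝ) • u - t • w) x := by
  have hprod (x : Fin n → ℝ) (t : ℝ) :
      dotR ((1 / 2 : ℝ) • u + t • w) x * dotR ((1 / 2 : ℝ) • u - t • w) x =
        dotR u x ^ 2 / 4 - t ^ 2 * dotR w x ^ 2 := by
    simp only [dotR_eq_dotProduct, add_dotProduct, sub_dotProduct, smul_dotProduct, smul_eq_mul]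
    ring
  have hev : ∀ x ∈ S, ∀ᶠ t in 𝓝 (0 : ℝ), 0 ≤ dotR u x ^ 2 / 4 - t ^ 2 * dotR w x ^ 2 := by
    intro x hx
    by_cases hux : dotR u x = 0
    · simp [hux, hzero x hx hux]
    · have hlim : Tendsto (fun t : ℝ => dotR u x ^ 2 / 4 - t ^ 2 * dotR w x ^ 2) (𝓝 0)
          (𝓝 (dotR u x ^ 2 / 4)) :=
        (by fun_prop : Continuous fun t : ℝ => dotR u x ^ 2 / 4 - t ^ 2 * dotR w x ^ 2
          ).tendsto' 0 _ (by simp)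
      exact (hlim.eventually (lt_mem_nhds (by positivity))).mono fun t ht => ht.le
  obtain ⟨t, hall, ht⟩ := (((eventually_all_finite hS).mpr hev).filter_mono nhdsWithin_le_nhds
    |>.and (self_mem_nhdsWithin : Set.Ioi (0 : ℝ) ∈ 𝓝[>] 0)).exists
  exact ⟨t, ht, fun x hx => (hprod x t).symm ▸ hall x hx⟩

lemma decomp_of_not_exists_eq_smul (hS : S.Finite) (hu : u ∈ Submodule.span ℝ S)
    (hw : w ∈ Submodule.span ℝ S) (hzero : ∀ x ∈ S, dotR u x = 0 → dotR w x = 0)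
    (hne : ¬ ∃ c : ℝ, w = c • u) : Decomp S u := by
  obtain ⟨t, ht, hsign⟩ := exists_pos_forall_dotR_mul_nonneg hS hzero
  have hindep (a b : ℝ) (hb : b ≠ 0) : a • u + b • w ≠ 0 := fun h =>
    hne ⟨-a / b, funext fun k => by
      have := congrFun h k
      simp only [Pi.add_apply, Pi.smul_apply, smul_eq_mul, Pi.zero_apply] at this ⊢
      field_simp
      linarith⟩
  refine ⟨(1 / 2 : ℝ) • u + t • w, (1 / 2 : ℝ) • u - t • w, hindep _ _ ht.ne', ?_,
    add_mem (Submodule.smul_mem _ _ hu) (Submodule.smul_mem _ _ hw),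
    sub_mem (Submodule.smul_mem _ _ hu) (Submodule.smul_mem _ _ hw), by module, ?_, ?_, hsign⟩
  · simpa [sub_eq_add_neg] using hindep (1 / 2) (-t) (neg_ne_zero.mpr ht.ne')
  · rintro ⟨r, -, hr⟩
    exact hindep (1 / 2 - r) t ht.ne' (by linear_combination (norm := module) hr)
  · rintro ⟨r, -, hr⟩
    exact hindep (1 / 2 - r) (-t) (neg_ne_zero.mpr ht.ne')
      (by linear_combination (norm := module) hr)

lemma not_decomp_of_forall_exists_eq_smul
    (hrigid : ∀ w ∈ Submodule.span ℝ S, (∀ x ∈ S, dotR u x = 0 → dotR w x = 0) →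
      ∃ c : ℝ, w = c • u) : ¬ Decomp S u := by
  rintro ⟨u', u'', hu'0, -, hu', -, rfl, hpos', hpos'', hsign⟩
  obtain ⟨c, hc⟩ := hrigid u' hu' fun x hx hux => by
    have hsum : dotR u' x + dotR u'' x = 0 := by
      rwa [dotR_eq_dotProduct, add_dotProduct] at hux
    have hprod := hsign x hx
    rw [show dotR u'' x = -dotR u' x by linarith] at hprod
    have hsq : dotR u' x ^ 2 = 0 := by nlinarith [sq_nonneg (dotR u' x)]
    exact pow_eq_zero_iff two_ne_zero |>.mp hsq
  rcases lt_trichotomy c 0 with hc0 | rfl | hc0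
  · exact hpos'' ⟨1 - c, by linarith, by linear_combination (norm := module) -hc⟩
  · exact hu'0 (by simpa using hc)
  · exact hpos' ⟨c, hc0, hc⟩

lemma indecomp_iff_forall_exists_eq_smul (hS : S.Finite) :
    Indecomp S u ↔ u ≠ 0 ∧ u ∈ Submodule.span ℝ S ∧ ∀ w ∈ Submodule.span ℝ S,
      (∀ x ∈ S, dotR u x = 0 → dotR w x = 0) → ∃ c : ℝ, w = c • u :=
  ⟨fun ⟨hu0, hu, hnd⟩ => ⟨hu0, hu, fun _ hw hzero => by_contra fun hne =>
      hnd (decomp_of_not_exists_eq_smul hS hu hw hzero hne)⟩,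
    fun ⟨hu0, hu, hrigid⟩ => ⟨hu0, hu, not_decomp_of_forall_exists_eq_smul hrigid⟩⟩

end Indecomposable

section ZeroSumGraph

variable {V : Type*}

def zeroSumGraph (G : SimpleGraph V) (u : V → ℝ) : SimpleGraph V where
  Adj i j := G.Adj i j ∧ u i + u j = 0
  symm := ⟨fun _ _ h => ⟨h.1.symm, by rw [add_comm]; exact h.2⟩⟩
  loopless := ⟨fun i h => G.loopless.irrefl i h.1⟩

lemma isAlternating_zeroSumGraph (G : SimpleGraph V) (u : V → ℝ) :
    IsAlternating (zeroSumGraph G u) u :=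
  fun _ _ h => h.2

lemma zeroSumGraph_smul (G : SimpleGraph V) (u : V → ℝ) {r : ℝ} (hr : r ≠ 0) :
    zeroSumGraph G (r • u) = zeroSumGraph G u := by
  ext i j
  simp only [zeroSumGraph, Pi.smul_apply, smul_eq_mul, ← mul_add, mul_eq_zero, hr, false_or]

end ZeroSumGraph

section EdgeVectors

variable {n : ℕ} {G : SimpleGraph (Fin n)}

lemma dotR_edgeVec (w : Fin n → ℝ) {i j : Fin n} (h : i ≠ j) :
    dotR w (edgeVec s(i, j)) = w i + w j := by
  simp [dotR, edgeVec, Finset.sum_ite, Finset.filter_or, Finset.filter_eq', h]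

lemma exists_ne_zero_forall_dotR_eq_zero {S : Set (Fin n → ℝ)}
    (h : Submodule.span ℝ S ≠ ⊤) :
    ∃ z ≠ 0, ∀ x ∈ S, dotR z x = 0 := by
  obtain ⟨f, hf0, hle⟩ :=
    (Submodule.span ℝ S).exists_le_ker_of_lt_top (lt_top_iff_ne_top.mpr h)
  set z : Fin n → ℝ := fun i => f fun j => if i = j then 1 else 0
  have hf (x : Fin n → ℝ) : f x = dotR z x := by
    rw [LinearMap.pi_apply_eq_sum_univ, dotR]
    exact Finset.sum_congr rfl fun i _ => mul_comm _ _
  refine ⟨z, fun hz => hf0 (LinearMap.ext fun x => by simp [hf, hz, dotR]), fun x hx => ?_⟩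
  rw [← hf]
  exact hle (Submodule.subset_span hx)

lemma span_edgeVecs_eq_top (hconn : G.Connected) (hnb : ¬ IsBipartiteG G) :
    Submodule.span ℝ (edgeVecs G) = ⊤ := by
  by_contra h
  obtain ⟨z, hz0, hz⟩ := exists_ne_zero_forall_dotR_eq_zero h
  refine hz0 (IsAlternating.eq_zero hconn hnb fun i j hij => ?_)
  rw [← dotR_edgeVec z hij.ne]
  exact hz _ ⟨s(i, j), hij, rfl⟩

lemma forall_edgeVecs_dotR_eq_zero_iff {u w : Fin n → ℝ} :
    (∀ x ∈ edgeVecs G, dotR u x = 0 → dotR w x = 0) ↔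
      IsAlternating (zeroSumGraph G u) w := by
  constructor
  · rintro h i j ⟨hij, hu⟩
    have := h _ ⟨s(i, j), hij, rfl⟩
    rw [dotR_edgeVec _ hij.ne, dotR_edgeVec _ hij.ne] at this
    exact this hu
  · rintro h _ ⟨e, he, rfl⟩
    induction e using Sym2.ind with
    | _ i j =>
      rw [dotR_edgeVec _ (G.ne_of_adj he), dotR_edgeVec _ (G.ne_of_adj he)]
      exact fun hu => h i j ⟨he, hu⟩

lemma indecomp_edgeVecs_iff (hconn : G.Connected) (hnb : ¬ IsBipartiteG G) (u : Fin n → ℝ) :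
    Indecomp (edgeVecs G) u ↔
      u ≠ 0 ∧ ∀ w, IsAlternating (zeroSumGraph G u) w → ∃ c : ℝ, w = c • u := by
  rw [indecomp_iff_forall_exists_eq_smul (S := edgeVecs G) ((Set.toFinite _).image _),
    span_edgeVecs_eq_top hconn hnb]
  simp only [Submodule.mem_top, true_and, forall_const, forall_edgeVecs_dotR_eq_zero_iff]

end EdgeVectors

section SignVector

variable {n : ℕ} {G : SimpleGraph (Fin n)} {I J : Finset (Fin n)}

def signVec (I J : Finset (Fin n)) : Fin n → ℝ :=
  fun k => (if k ∈ I then 1 else 0) - (if k ∈ J then 1 else 0)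

lemma signVec_of_mem_left (hd : Disjoint I J) {k : Fin n} (hk : k ∈ I) : signVec I J k = 1 := by
  simp [signVec, hk, Finset.disjoint_left.mp hd hk]

lemma signVec_of_mem_right (hd : Disjoint I J) {k : Fin n} (hk : k ∈ J) : signVec I J k = -1 := by
  simp [signVec, hk, Finset.disjoint_right.mp hd hk]

lemma signVec_eq_zero_iff (hd : Disjoint I J) {k : Fin n} :
    signVec I J k = 0 ↔ k ∉ (I : Set (Fin n)) ∪ J := by
  by_cases hI : k ∈ I
  · simp [signVec_of_mem_left hd hI, hI]
  · by_cases hJ : k ∈ J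
    · simp [signVec_of_mem_right hd hJ, hJ]
    · simp [signVec, hI, hJ]

lemma crossSubgraph_adj {x y : ((I : Set (Fin n)) ∪ J : Set (Fin n))} :
    (crossSubgraph G I J).Adj x y ↔
      G.Adj x y ∧
        ((x : Fin n) ∈ I ∧ (y : Fin n) ∈ J ∨ (y : Fin n) ∈ I ∧ (x : Fin n) ∈ J) := by
  simp only [crossSubgraph, SimpleGraph.induce_adj, SimpleGraph.fromRel_adj]
  constructor
  · rintro ⟨-, ⟨h, hx, hy⟩ | ⟨h, hy, hx⟩⟩
    exacts [⟨h, .inl ⟨hx, hy⟩⟩, ⟨h.symm, .inr ⟨hy, hx⟩⟩]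
  · rintro ⟨h, ⟨hx, hy⟩ | ⟨hy, hx⟩⟩
    exacts [⟨h.ne, .inl ⟨h, hx, hy⟩⟩, ⟨h.ne, .inr ⟨h.symm, hy, hx⟩⟩]

lemma signVec_ne_zero (hd : Disjoint I J) (hcross : (crossSubgraph G I J).Connected) :
    signVec I J ≠ 0 := by
  obtain ⟨x⟩ := hcross.nonempty
  exact Function.ne_iff.mpr ⟨x, (signVec_eq_zero_iff hd).not.mpr (not_not.mpr x.2)⟩

/-- The zero-sum graph of `signVec I J` contains the `I`–`J` edges, on which the solutions are
forced up to a common scalar, and all edges of `G - (I ∪ J)`, on which they vanish. -/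
lemma exists_eq_smul_signVec (hd : Disjoint I J) (hcross : (crossSubgraph G I J).Connected)
    (hcomp : ∀ c : (G.induce (((I : Set (Fin n)) ∪ (J : Set (Fin n)))ᶜ)).ConnectedComponent,
      ¬ IsBipartiteG ((G.induce (((I : Set (Fin n)) ∪ (J : Set (Fin n)))ᶜ)).induce c.supp))
    (w : Fin n → ℝ) (hw : IsAlternating (zeroSumGraph G (signVec I J)) w) :
    ∃ c : ℝ, w = c • signVec I J := by
  have hcross_sum {x y : ((I : Set (Fin n)) ∪ J : Set (Fin n))}
      (hxy : (crossSubgraph G I J).Adj x y) :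
      signVec I J x + signVec I J y = 0 := by
    rcases (crossSubgraph_adj.mp hxy).2 with ⟨hx, hy⟩ | ⟨hy, hx⟩
    · rw [signVec_of_mem_left hd hx, signVec_of_mem_right hd hy]; norm_num
    · rw [signVec_of_mem_right hd hx, signVec_of_mem_left hd hy]; norm_num
  have hwK (k : Fin n) (hk : k ∉ (I : Set (Fin n)) ∪ J) : w k = 0 := by
    set C := (G.induce ((I : Set (Fin n)) ∪ J)ᶜ).connectedComponentMk ⟨k, hk⟩
    have hzero := IsAlternating.eq_zero C.connected_toSimpleGraph (hcomp C)
      (z := fun x => w x.1.1) fun a b hab => hw _ _ ⟨hab, by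
        rw [(signVec_eq_zero_iff hd).mpr a.1.2, (signVec_eq_zero_iff hd).mpr b.1.2, add_zero]⟩
    exact congrFun hzero ⟨⟨k, hk⟩, rfl⟩
  obtain ⟨c, hc⟩ := IsAlternating.exists_eq_smul hcross (u := fun x => signVec I J x)
    (w := fun x => w x) (fun _ _ => hcross_sum)
    (fun x => (signVec_eq_zero_iff hd).not.mpr (not_not.mpr x.2))
    (fun _ _ hxy => hw _ _ ⟨(crossSubgraph_adj.mp hxy).1, hcross_sum hxy⟩)
  refine ⟨c, funext fun k => ?_⟩
  by_cases hk : k ∈ (I : Set (Fin n)) ∪ J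
  · exact congrFun hc ⟨k, hk⟩
  · simp [hwK k hk, (signVec_eq_zero_iff hd).mpr hk]

end SignVector

section Rigid

variable {V : Type*} {u : V → ℝ}

/-- Restricting `u` to the component of `v0` gives another alternating function, which must be
`u` itself. -/
lemma mem_supp_connectedComponentMk_iff {H : SimpleGraph V} (hu : IsAlternating H u)
    (hrigid : ∀ w, IsAlternating H w → ∃ c : ℝ, w = c • u) {v0 : V} (hv0 : u v0 ≠ 0)
    (x : V) :
    x ∈ (H.connectedComponentMk v0).supp ↔ u x ≠ 0 := by
  set C := H.connectedComponentMk v0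
  constructor
  · intro hx
    rcases hu.eq_or_eq_neg_of_reachable (SimpleGraph.ConnectedComponent.exact hx) with h | h <;>
      simpa [h] using hv0
  · intro hx
    by_contra hxC
    have hw := IsAlternating.dite_of_induce (T := C.supp)
      (fun a b hab ha => (C.mem_supp_congr_adj hab).mp ha) (z := fun y => u y)
      fun a b hab => hu _ _ hab
    obtain ⟨c, hc⟩ := hrigid _ hw
    have hc1 : c = 1 := by
      have := congrFun hc v0
      simp only [SimpleGraph.ConnectedComponent.mem_supp_iff, C, dite_true, Pi.smul_apply,
        smul_eq_mul] at this
      exact (mul_eq_right₀ hv0).mp this.symm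
    have := congrFun hc x
    simp only [hxC, ↓reduceDIte, hc1, Pi.smul_apply, smul_eq_mul, one_mul] at this
    exact hx this.symm

lemma abs_eq_abs_of_ne_zero {H : SimpleGraph V} (hu : IsAlternating H u)
    (hrigid : ∀ w, IsAlternating H w → ∃ c : ℝ, w = c • u) {v0 x : V} (hv0 : u v0 ≠ 0)
    (hx : u x ≠ 0) : |u x| = |u v0| := by
  have hreach := SimpleGraph.ConnectedComponent.exact
    ((mem_supp_connectedComponentMk_iff hu hrigid hv0 x).mpr hx)
  rcases hu.eq_or_eq_neg_of_reachable hreach.symm with h | h <;> simp [h]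

/-- A bipartite component of `G - K` would carry a `±1` function, alternating on its edges;
extended by zero it is alternating on the zero-sum graph of `u`, but not a multiple of `u`. -/
lemma not_isBipartiteG_induce_supp {G : SimpleGraph V}
    (hrigid : ∀ w, IsAlternating (zeroSumGraph G u) w → ∃ c : ℝ, w = c • u) {K : Set V}
    (hK : ∀ x, x ∈ K ↔ u x = 0) (C : (G.induce K).ConnectedComponent) :
    ¬ IsBipartiteG ((G.induce K).induce C.supp) := by
  intro hbip
  obtain ⟨z, hz, hz0⟩ := isBipartiteG_iff_exists_isAlternating.mp hbip
  have hzK := IsAlternating.dite_of_induce (T := C.supp)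
    (fun a b hab ha => (C.mem_supp_congr_adj hab).mp ha) hz
  have hw := IsAlternating.dite_of_induce (H := zeroSumGraph G u) (T := K)
    (fun a b hab ha => (hK b).mpr (by linarith [hab.2, (hK a).mp ha])) fun a b hab => hzK a b hab.1
  obtain ⟨c, hc⟩ := hrigid _ hw
  obtain ⟨x, hx⟩ := C.nonempty_supp
  have := congrFun hc x
  simp only [x.2, ↓reduceDIte, Subtype.coe_eta, hx, Pi.smul_apply, (hK x).mp x.2, smul_eq_mul,
    mul_zero] at this
  exact hz0 ⟨x, hx⟩ this

end Rigid

lemma exists_signVec_of_forall_exists_eq_smul {n : ℕ} {G : SimpleGraph (Fin n)}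
    {u : Fin n → ℝ} (hu0 : u ≠ 0)
    (hrigid : ∀ w, IsAlternating (zeroSumGraph G u) w → ∃ c : ℝ, w = c • u) :
    ∃ I J : Finset (Fin n), Disjoint I J ∧
      (crossSubgraph G I J).Connected ∧
      (∀ c : (G.induce (((I : Set (Fin n)) ∪ (J : Set (Fin n)))ᶜ)).ConnectedComponent,
        ¬ IsBipartiteG
          ((G.induce (((I : Set (Fin n)) ∪ (J : Set (Fin n)))ᶜ)).induce c.supp)) ∧
      PosEq (signVec I J) u := by
  obtain ⟨v0, hv0⟩ := Function.ne_iff.mp hu0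
  have hu := isAlternating_zeroSumGraph G u
  set I := Finset.univ.filter (0 < u ·)
  set J := Finset.univ.filter (u · < 0)
  have hd : Disjoint I J := Finset.disjoint_filter.mpr fun _ _ h1 h2 => lt_asymm h1 h2
  have hIJ (x : Fin n) : x ∈ (I : Set (Fin n)) ∪ J ↔ u x ≠ 0 := by
    simp only [Set.mem_union, Finset.coe_filter, Finset.mem_univ, true_and, Set.mem_ofPred_eq, I, J]
    rw [or_comm]
    exact lt_or_lt_iff_ne
  have hsupp : (I : Set (Fin n)) ∪ J = ((zeroSumGraph G u).connectedComponentMk v0).supp :=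
    Set.ext fun x => (hIJ x).trans (mem_supp_connectedComponentMk_iff hu hrigid hv0 x).symm
  refine ⟨I, J, hd, ?_, not_isBipartiteG_induce_supp hrigid fun x => (hIJ x).not_left, ?_⟩
  · refine SimpleGraph.Connected.mono (G := (zeroSumGraph G u).induce ((I : Set (Fin n)) ∪ J))
      (fun x y hxy => crossSubgraph_adj.mpr ⟨hxy.1, ?_⟩)
      (hsupp ▸ SimpleGraph.ConnectedComponent.connected_toSimpleGraph _)
    have hsum : u x + u y = 0 := hxy.2
    rcases ((hIJ x).mp x.2).lt_or_gt with h | h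
    · exact .inr ⟨Finset.mem_filter.mpr ⟨Finset.mem_univ _, by linarith⟩, by simpa [J] using h⟩
    · exact .inl ⟨by simpa [I] using h, Finset.mem_filter.mpr ⟨Finset.mem_univ _, by linarith⟩⟩
  · refine ⟨|u v0|, abs_pos.mpr hv0, funext fun x => ?_⟩
    rcases lt_trichotomy (u x) 0 with h | h | h
    · rw [Pi.smul_apply, signVec_of_mem_right hd (by simpa [J] using h), smul_eq_mul,
        ← abs_eq_abs_of_ne_zero hu hrigid hv0 h.ne, abs_of_neg h, mul_neg_one, neg_neg]
    · rw [Pi.smul_apply, (signVec_eq_zero_iff hd).mpr ((hIJ x).not_left.mpr h), smul_zero, h]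
    · rw [Pi.smul_apply, signVec_of_mem_left hd (by simpa [I] using h), smul_eq_mul,
        ← abs_eq_abs_of_ne_zero hu hrigid hv0 h.ne', abs_of_pos h, mul_one]

/-- **Lemma 4.1(II)**: for a connected non-bipartite graph `G`, the `G`-indecomposable
points are exactly the points `[∑_{i∈I} f_i - ∑_{j∈J} f_j]` for disjoint `I, J` such
that the subgraph with vertex set `I ∪ J` and edges between `I` and `J` is connected
and no connected component of `G - (I ∪ J)` is bipartite. -/
theorem nonbipartite_G_indecomposable {n : ℕ} (G : SimpleGraph (Fin n))
    (hconn : G.Connected) (hnb : ¬ IsBipartiteG G) :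
    ∀ u : Fin n → ℝ,
      Indecomp (edgeVecs G) u ↔
        ∃ I J : Finset (Fin n), Disjoint I J ∧
          (crossSubgraph G I J).Connected ∧
          (∀ c : (G.induce (((I : Set (Fin n)) ∪ (J : Set (Fin n)))ᶜ)).ConnectedComponent,
            ¬ IsBipartiteG
              ((G.induce (((I : Set (Fin n)) ∪ (J : Set (Fin n)))ᶜ)).induce c.supp)) ∧
          PosEq (fun k => (if k ∈ I then (1 : ℝ) else 0) - (if k ∈ J then 1 else 0)) u := by
  intro u
  rw [indecomp_edgeVecs_iff hconn hnb]
  constructor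
  · rintro ⟨hu0, hrigid⟩
    exact exists_signVec_of_forall_exists_eq_smul hu0 hrigid
  · rintro ⟨I, J, hd, hcross, hcomp, r, hr, rfl⟩
    refine ⟨smul_ne_zero hr.ne' (signVec_ne_zero hd hcross), fun w hw => ?_⟩
    rw [zeroSumGraph_smul G _ hr.ne'] at hw
    obtain ⟨c, rfl⟩ := exists_eq_smul_signVec hd hcross hcomp w hw
    exact ⟨c / r, by rw [smul_smul, div_mul_cancel₀ c hr.ne']; rfl⟩
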